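/- arXiv:2309.03794 — 3 statements merged into one kernel-verified Lean document; each statement's English description precedes it below -/
import Mathlib

section
/- Let p be a prime, let G be a simple graph on a vertex set V equipped with an action of ℤ/pℤ by graph automorphisms, and let A ⊆ V be an orbit of this action of cardinality exactly p. If every vertex a ∈ A is joined by a path in G to some vertex a′ ∈ A with a′ ≠ a, then any two vertices of A lie in the same connected component of G (i.e., all of A is contained in a single connected component). -/
/-- Let `p` be a prime, `G` a simple graph on `V` equipped with an action of `ℤ/pℤ` by
graph automorphisms, and `A ⊆ V` an orbit of this action of cardinality exactly `p`.
If every vertex `a ∈ A` is joined by a path in `G` to some other vertex `a' ∈ A`, then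
any two vertices of `A` lie in the same connected component of `G`. -/
theorem orbit_in_one_component {V : Type*} (p : ℕ) (hp : p.Prime) (G : SimpleGraph V)
    (act : ZMod p → V → V)
    (hact_zero : ∀ v, act 0 v = v)
    (hact_add : ∀ a b v, act (a + b) v = act a (act b v))
    (hact_adj : ∀ a u v, G.Adj u v → G.Adj (act a u) (act a v))
    (A : Set V) (v₀ : V) (hA : A = {w | ∃ a : ZMod p, w = act a v₀})
    (hcard : A.ncard = p)
    (hpath : ∀ a ∈ A, ∃ a' ∈ A, a' ≠ a ∧ G.Reachable a a') :
    ∀ a ∈ A, ∀ b ∈ A, G.Reachable a b := by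
  haveI : Fact p.Prime := ⟨hp⟩
  have hreach : ∀ (g : ZMod p) (u v : V), G.Reachable u v →
      G.Reachable (act g u) (act g v) := by
    intro g u v h
    exact h.map ⟨act g, fun h => hact_adj g _ _ h⟩
  have hv0A : v₀ ∈ A := by rw [hA]; exact ⟨0, (hact_zero v₀).symm⟩
  have key : ∀ g : ZMod p, G.Reachable v₀ (act g v₀) := by
    obtain ⟨a', ha'A, hne, hr⟩ := hpath v₀ hv0A
    rw [hA] at ha'A
    obtain ⟨g, rfl⟩ := ha'A
    have hg : g ≠ 0 := by rintro rfl; exact hne (hact_zero v₀)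
    have hn : ∀ n : ℕ, G.Reachable v₀ (act (n • g) v₀) := by
      intro n
      induction n with
      | zero => rw [zero_smul, hact_zero]
      | succ n ih =>
        have h1 : G.Reachable (act g v₀) (act (g + n • g) v₀) := by
          rw [hact_add]; exact hreach g _ _ ih
        have h2 : (n + 1) • g = g + n • g := by
          rw [add_smul, one_smul, add_comm]
        rw [h2]
        exact hr.trans h1
    intro h
    have hh : h = (h * g⁻¹).val • g := by
      rw [nsmul_eq_mul, ZMod.natCast_val, ZMod.cast_id]
      field_simp
    rw [hh]
    exact hn _
  intro a ha b hb
  rw [hA] at ha hb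
  obtain ⟨ga, rfl⟩ := ha
  obtain ⟨gb, rfl⟩ := hb
  exact (key ga).symm.trans (key gb)
end

section
/- For every integer n ≥ 1 there exists a sizeable graph of rank n. That is, there exist finite types A and B, a simple graph Γ on the disjoint union A ⊔ B all of whose edges join an element of A to an element of B, and families of subsets A_i^s ⊆ A and B_j^t ⊆ B indexed by i, j ∈ {1, …, n} and s, t ∈ {+, −}, such that: (i) each A_i^s and each B_j^t is nonempty, the sets A_i^s are pairwise disjoint with union A, and the sets B_j^t are pairwise disjoint with union B; (ii) Γ contains no embedded cycle of length 4; and (iii) for every choice of i, j ∈ {1, …, n} and s, t ∈ {+, −}, the subgraph of Γ induced on A_i^s ∪ B_j^t is connected. -/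
/-!
Take `A = B = K × ZMod p`, where `K = Fin n × Bool` indexes the blocks, and label the triples
`(k, l, s) : K × K × Bool` injectively by a Sidon set `w` in `ZMod p` (powers of two, `p` a large
prime). Join `(k, x) ∈ A` to `(l, y) ∈ B` when `y - x = w (k, l, s)` for some `s`.

A 4-cycle `a₁ b₁ a₂ b₂` gives `(y₁ - x₁) + (y₂ - x₂) = (y₂ - x₁) + (y₁ - x₂)`, an additive
relation between four labels, which the Sidon property allows only when `a₁ = a₂` or `b₁ = b₂`.
Inside the blocks `k` and `l`, the two labels `w (k, l, true)` and `w (k, l, false)` give a path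
from `(k, x)` to `(k, x + w (k, l, true) - w (k, l, false))`; this difference is nonzero, hence
generates `ZMod p`, so the induced subgraph is connected.
-/

open Function SimpleGraph

def IsSidon {G : Type*} [Add G] (S : Set G) : Prop :=
  ∀ ⦃a⦄, a ∈ S → ∀ ⦃b⦄, b ∈ S → ∀ ⦃c⦄, c ∈ S → ∀ ⦃d⦄, d ∈ S →
    a + b = c + d → a = c ∧ b = d ∨ a = d ∧ b = c

theorem IsSidon.mono {G : Type*} [Add G] {S T : Set G} (hT : IsSidon T) (h : S ⊆ T) :
    IsSidon S :=
  fun _ ha _ hb _ hc _ hd => hT (h ha) (h hb) (h hc) (h hd)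

theorem IsSidon.image_natCast {p : ℕ} {S : Set ℕ} (hS : IsSidon S) (hp : ∀ a ∈ S, 2 * a < p) :
    IsSidon ((Nat.cast : ℕ → ZMod p) '' S) := by
  rintro _ ⟨a, ha, rfl⟩ _ ⟨b, hb, rfl⟩ _ ⟨c, hc, rfl⟩ _ ⟨d, hd, rfl⟩ h
  have hsum : a + b = c + d := by
    rw [← Nat.cast_add, ← Nat.cast_add, ZMod.natCast_eq_natCast_iff',
      Nat.mod_eq_of_lt, Nat.mod_eq_of_lt] at h
    · exact h
    all_goals linarith [hp a ha, hp b hb, hp c hc, hp d hd]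
  exact (hS ha hb hc hd hsum).imp (And.imp (congrArg _) (congrArg _))
    (And.imp (congrArg _) (congrArg _))

theorem Nat.two_pow_add_two_pow_inj {a b c d : ℕ} (hab : a ≤ b) (hcd : c ≤ d)
    (h : 2 ^ a + 2 ^ b = 2 ^ c + 2 ^ d) : a = c ∧ b = d := by
  wlog hac : a ≤ c generalizing a b c d
  · exact (this hcd hab h.symm (by omega)).imp Eq.symm Eq.symm
  obtain rfl | hac := hac.eq_or_lt
  · exact ⟨rfl, Nat.pow_right_injective le_rfl (Nat.add_left_cancel h)⟩
  exfalso
  -- every term on the right is divisible by `2 ^ (a + 1)`, but `2 ^ a + 2 ^ b` is not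
  have hdvd : 2 ^ (a + 1) ∣ 2 ^ a + 2 ^ b :=
    h ▸ dvd_add (pow_dvd_pow 2 hac) (pow_dvd_pow 2 (hac.trans_le hcd))
  obtain rfl | hab := hab.eq_or_lt
  · have hc : 2 ^ (a + 1) ≤ 2 ^ c := pow_le_pow_right₀ (by norm_num) hac
    have hd : 2 ^ c ≤ 2 ^ d := pow_le_pow_right₀ (by norm_num) hcd
    have : 2 ^ (a + 1) = 2 ^ a + 2 ^ a := by ring
    have : 0 < 2 ^ a := by positivity
    omega
  · have := Nat.le_of_dvd (by positivity) ((Nat.dvd_add_left (pow_dvd_pow 2 hab)).mp hdvd)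
    have : 2 ^ a < 2 ^ (a + 1) := Nat.pow_lt_pow_succ one_lt_two
    omega

theorem Nat.isSidon_range_two_pow : IsSidon (Set.range (2 ^ · : ℕ → ℕ)) := by
  have key : ∀ a b c d : ℕ, a ≤ b → 2 ^ a + 2 ^ b = 2 ^ c + 2 ^ d →
      2 ^ a = 2 ^ c ∧ 2 ^ b = 2 ^ d ∨ 2 ^ a = 2 ^ d ∧ 2 ^ b = 2 ^ c := by
    intro a b c d hab h
    rcases le_total c d with hcd | hdc
    · obtain ⟨rfl, rfl⟩ := two_pow_add_two_pow_inj hab hcd h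
      exact .inl ⟨rfl, rfl⟩
    · obtain ⟨rfl, rfl⟩ := two_pow_add_two_pow_inj hab hdc (h.trans (add_comm _ _))
      exact .inr ⟨rfl, rfl⟩
  rintro _ ⟨a, rfl⟩ _ ⟨b, rfl⟩ _ ⟨c, rfl⟩ _ ⟨d, rfl⟩ h
  rcases le_total a b with hab | hba
  · exact key a b c d hab h
  · exact (key b a d c hba (by simpa only [add_comm] using h)).imp And.symm And.symm

theorem exists_prime_injective_zmod_isSidon (X : Type*) [Finite X] :
    ∃ p, p.Prime ∧ ∃ w : X → ZMod p, Injective w ∧ IsSidon (Set.range w) := by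
  obtain ⟨N, ⟨e⟩⟩ := Finite.exists_equiv_fin X
  obtain ⟨p, hpN, hp⟩ := Nat.exists_infinite_primes (2 ^ N + 1)
  set S := (2 ^ · : ℕ → ℕ) '' Set.Iio N
  have hsmall (t : ℕ) (ht : t < N) : 2 * 2 ^ t < p := by
    have : 2 ^ (t + 1) ≤ 2 ^ N := Nat.pow_le_pow_right two_pos ht
    rw [pow_succ] at this
    omega
  have hS : ∀ a ∈ S, 2 * a < p := by
    rintro _ ⟨t, ht, rfl⟩
    exact hsmall t ht
  refine ⟨p, hp, fun x => ((2 ^ (e x : ℕ) : ℕ) : ZMod p), fun x y h => ?_, ?_⟩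
  · have := hsmall _ (e x).2
    have := hsmall _ (e y).2
    rw [ZMod.natCast_eq_natCast_iff', Nat.mod_eq_of_lt (by omega), Nat.mod_eq_of_lt (by omega)] at h
    exact e.injective (Fin.ext (Nat.pow_right_injective le_rfl h))
  · refine (Nat.isSidon_range_two_pow.mono (Set.image_subset_range _ _)).image_natCast hS |>.mono ?_
    rintro _ ⟨x, rfl⟩
    exact ⟨_, ⟨_, (e x).2, rfl⟩, rfl⟩

theorem SimpleGraph.Walk.IsCycle.exists_adj_of_length_eq_four {V : Type*} {G : SimpleGraph V}
    {u : V} {c : G.Walk u u} (hc : c.IsCycle) (h4 : c.length = 4) :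
    ∃ x y z, u ≠ y ∧ x ≠ z ∧ G.Adj u x ∧ G.Adj x y ∧ G.Adj y z ∧ G.Adj z u := by
  rcases c with _ | ⟨h₁, _ | ⟨h₂, _ | ⟨h₃, _ | ⟨h₄, _ | ⟨_, _⟩⟩⟩⟩⟩ <;>
    simp only [Walk.length_cons, Walk.length_nil] at h4 <;> try omega
  have hnd := hc.support_nodup
  simp only [Walk.support_cons, Walk.support_nil, List.tail_cons, List.nodup_cons,
    List.mem_cons, List.not_mem_nil] at hnd
  exact ⟨_, _, _, fun h => hnd.2.1 (.inr (.inl h.symm)), fun h => hnd.1 (.inr (.inl h)),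
    h₁, h₂, h₃, h₄⟩

theorem SimpleGraph.exists_inl_inr_of_adj {A B : Type*} {Γ : SimpleGraph (A ⊕ B)}
    (hA : ∀ a a', ¬Γ.Adj (.inl a) (.inl a')) (hB : ∀ b b', ¬Γ.Adj (.inr b) (.inr b'))
    {x y : A ⊕ B} (h : Γ.Adj x y) :
    ∃ a b, (x = .inl a ∧ y = .inr b) ∨ (x = .inr b ∧ y = .inl a) := by
  rcases x with a | b <;> rcases y with a' | b'
  · exact (hA a a' h).elim
  · exact ⟨a, b', .inl ⟨rfl, rfl⟩⟩
  · exact ⟨a', b, .inr ⟨rfl, rfl⟩⟩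
  · exact (hB b b' h).elim

theorem SimpleGraph.not_exists_isCycle_length_four_of_bipartite {A B : Type*}
    {Γ : SimpleGraph (A ⊕ B)} (hA : ∀ a a', ¬Γ.Adj (.inl a) (.inl a'))
    (hB : ∀ b b', ¬Γ.Adj (.inr b) (.inr b'))
    (hK : ∀ a₁ a₂ b₁ b₂, Γ.Adj (.inl a₁) (.inr b₁) → Γ.Adj (.inl a₁) (.inr b₂) →
      Γ.Adj (.inl a₂) (.inr b₁) → Γ.Adj (.inl a₂) (.inr b₂) → a₁ = a₂ ∨ b₁ = b₂) :
    ¬∃ (v : A ⊕ B) (c : Γ.Walk v v), c.IsCycle ∧ c.length = 4 := by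
  rintro ⟨v, c, hc, h4⟩
  obtain ⟨x, y, z, hvy, hxz, h₁, h₂, h₃, h₄⟩ := hc.exists_adj_of_length_eq_four h4
  rcases v with a₁ | b₁ <;> rcases x with a₂ | b₂ <;> rcases y with a₃ | b₃ <;>
    rcases z with a₄ | b₄ <;>
    first
    | exact hA _ _ ‹_› | exact hB _ _ ‹_›
    | exact (hK _ _ _ _ h₁ h₄.symm h₂.symm h₃).elim (fun h => hvy (congrArg _ h))
        (fun h => hxz (congrArg _ h))
    | exact (hK _ _ _ _ h₁.symm h₂ h₄ h₃.symm).elim (fun h => hxz (congrArg _ h))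
        (fun h => hvy (congrArg _ h))

section BlockGraph

variable {K ι G : Type*} [AddCommGroup G]

def blockGraph (w : K × K × ι → G) : SimpleGraph ((K × G) ⊕ (K × G)) where
  Adj
    | .inl a, .inr b | .inr b, .inl a => ∃ s, b.2 - a.2 = w (a.1, b.1, s)
    | _, _ => False
  symm := ⟨by rintro (_ | _) (_ | _) h <;> exact h⟩
  loopless := ⟨by rintro (_ | _) h <;> exact h⟩

variable {w : K × K × ι → G}

theorem blockGraph_not_adj_inl_inl (a a' : K × G) : ¬(blockGraph w).Adj (.inl a) (.inl a') :=
  id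

theorem blockGraph_not_adj_inr_inr (b b' : K × G) : ¬(blockGraph w).Adj (.inr b) (.inr b') :=
  id

theorem blockGraph_eq_or_eq_of_adj (hw : Injective w) (hS : IsSidon (Set.range w))
    {a₁ a₂ b₁ b₂ : K × G} (h₁₁ : (blockGraph w).Adj (.inl a₁) (.inr b₁))
    (h₁₂ : (blockGraph w).Adj (.inl a₁) (.inr b₂)) (h₂₁ : (blockGraph w).Adj (.inl a₂) (.inr b₁))
    (h₂₂ : (blockGraph w).Adj (.inl a₂) (.inr b₂)) : a₁ = a₂ ∨ b₁ = b₂ := by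
  obtain ⟨s₁₁, e₁₁⟩ := h₁₁
  obtain ⟨s₁₂, e₁₂⟩ := h₁₂
  obtain ⟨s₂₁, e₂₁⟩ := h₂₁
  obtain ⟨s₂₂, e₂₂⟩ := h₂₂
  have hsum : w (a₁.1, b₁.1, s₁₁) + w (a₂.1, b₂.1, s₂₂) =
      w (a₁.1, b₂.1, s₁₂) + w (a₂.1, b₁.1, s₂₁) := by
    rw [← e₁₁, ← e₁₂, ← e₂₁, ← e₂₂]; abel
  rcases hS ⟨_, rfl⟩ ⟨_, rfl⟩ ⟨_, rfl⟩ ⟨_, rfl⟩ hsum with ⟨h, -⟩ | ⟨h, -⟩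
  · exact .inr (Prod.ext (congrArg (·.2.1) (hw h)) (sub_left_inj.1 (e₁₁.trans (h.trans e₁₂.symm))))
  · exact .inl (Prod.ext (congrArg (·.1) (hw h)) (sub_right_inj.1 (e₁₁.trans (h.trans e₂₁.symm))))

theorem blockGraph_induce_connected {k l : K} {s s' : ι}
    (hgen : ∀ g : G, g ∈ AddSubgroup.zmultiples (w (k, l, s) - w (k, l, s'))) :
    ((blockGraph w).induce (Sum.inl '' {a | a.1 = k} ∪ Sum.inr '' {b | b.1 = l})).Connected := by
  set S := Sum.inl '' {a : K × G | a.1 = k} ∪ Sum.inr '' {b : K × G | b.1 = l}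
  set H := (blockGraph w).induce S
  set c := w (k, l, s) - w (k, l, s') with hc
  let left (x : G) : S := ⟨.inl (k, x), .inl ⟨_, rfl, rfl⟩⟩
  let right (y : G) : S := ⟨.inr (l, y), .inr ⟨_, rfl, rfl⟩⟩
  have adj (x y : G) (t : ι) (h : y - x = w (k, l, t)) : H.Adj (left x) (right y) := ⟨t, h⟩
  have step (x : G) : H.Reachable (left x) (left (x + c)) :=
    (adj x _ s (by abel)).reachable.trans
      (adj _ (x + w (k, l, s)) s' (by rw [hc]; abel)).reachable.symm
  have reach_left (x : G) : H.Reachable (left 0) (left x) := by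
    obtain ⟨m, rfl⟩ := AddSubgroup.mem_zmultiples_iff.1 (hgen x)
    induction m using Int.induction_on with
    | zero => simp only [zero_smul]; rfl
    | succ m ih => exact ih.trans (by simpa only [add_smul, one_smul] using step _)
    | pred m ih =>
      exact ih.trans (by simpa only [sub_smul, one_smul, sub_add_cancel]
        using (step ((-m - 1 : ℤ) • c)).symm)
  have reach (v : S) : H.Reachable (left 0) v := by
    obtain ⟨_, ⟨⟨k', x⟩, hk : k' = k, rfl⟩ | ⟨⟨l', y⟩, hl : l' = l, rfl⟩⟩ := v
    · subst k'
      exact reach_left x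
    · subst l'
      exact (reach_left _).trans (adj (y - w (k, l, s)) y s (by abel)).reachable
  exact (connected_iff_exists_forall_reachable H).2 ⟨left 0, reach⟩

end BlockGraph

theorem Prod.fst_fiber_inter_nonempty_iff {X Y : Type*} [Nonempty Y] (k k' : X) :
    ({a : X × Y | a.1 = k} ∩ {a | a.1 = k'}).Nonempty ↔ k = k' := by
  refine ⟨fun ⟨a, h, h'⟩ => h.symm.trans h', ?_⟩
  rintro rfl
  exact ⟨(k, Classical.arbitrary Y), rfl, rfl⟩

theorem exists_sizeable_graph_general (n : ℕ) :
    ∃ (A B : Type) (Γ : SimpleGraph (A ⊕ B))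
      (Ab : Fin n → Bool → Set A) (Bb : Fin n → Bool → Set B),
      Finite A ∧ Finite B ∧
      (∀ x y, Γ.Adj x y →
        ∃ (a : A) (b : B), (x = Sum.inl a ∧ y = Sum.inr b) ∨
          (x = Sum.inr b ∧ y = Sum.inl a)) ∧
      (∀ i s j t, (Ab i s ∩ Ab j t).Nonempty ↔ (i = j ∧ s = t)) ∧
      (∀ i s j t, (Bb i s ∩ Bb j t).Nonempty ↔ (i = j ∧ s = t)) ∧
      (⋃ i, ⋃ s, Ab i s) = Set.univ ∧
      (⋃ j, ⋃ t, Bb j t) = Set.univ ∧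
      (¬ ∃ (v : A ⊕ B) (c : Γ.Walk v v), c.IsCycle ∧ c.length = 4) ∧
      (∀ i s j t,
        (Γ.induce (Sum.inl '' Ab i s ∪ Sum.inr '' Bb j t)).Connected) := by
  obtain ⟨p, hp, w, hw, hS⟩ :=
    exists_prime_injective_zmod_isSidon ((Fin n × Bool) × (Fin n × Bool) × Bool)
  have : Fact p.Prime := ⟨hp⟩
  have fiber_inter (i : Fin n) (s : Bool) (j : Fin n) (t : Bool) :=
    (Prod.fst_fiber_inter_nonempty_iff (Y := ZMod p) (i, s) (j, t)).trans Prod.mk_inj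
  have iUnion_fiber : ⋃ (i : Fin n) (s : Bool), {a : (Fin n × Bool) × ZMod p | a.1 = (i, s)} =
      Set.univ :=
    Set.eq_univ_of_forall fun a => Set.mem_iUnion₂.2 ⟨a.1.1, a.1.2, rfl⟩
  have hA := blockGraph_not_adj_inl_inl (w := w)
  have hB := blockGraph_not_adj_inr_inr (w := w)
  exact ⟨_, _, blockGraph w, fun i s => {a | a.1 = (i, s)}, fun j t => {b | b.1 = (j, t)},
    inferInstance, inferInstance, fun _ _ => exists_inl_inr_of_adj hA hB,
    fiber_inter, fiber_inter, iUnion_fiber, iUnion_fiber,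
    not_exists_isCycle_length_four_of_bipartite hA hB
      fun _ _ _ _ => blockGraph_eq_or_eq_of_adj hw hS,
    fun i s j t => blockGraph_induce_connected (s := true) (s' := false) fun _ =>
      mem_zmultiples_of_prime_card (Nat.card_zmod p) (sub_ne_zero.2 (hw.ne (by simp)))⟩

/-- For every integer `n ≥ 1` there exists a sizeable graph of rank `n`: finite types `A`
and `B`, a bipartite simple graph `Γ` on `A ⊕ B`, and families of blocks
`Ab i s ⊆ A`, `Bb j t ⊆ B` (indexed by `i, j ∈ Fin n` and signs `s, t : Bool`) such that
two blocks intersect nontrivially iff they are equal (in particular, each block is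
nonempty and distinct blocks are disjoint), the blocks cover `A` resp. `B`, `Γ` has no
embedded cycle of length `4`, and the subgraph of `Γ` induced on the union of any block
of `A` with any block of `B` is connected. -/
theorem exists_sizeable_graph (n : ℕ) (hn : 1 ≤ n) :
    ∃ (A B : Type) (Γ : SimpleGraph (A ⊕ B))
      (Ab : Fin n → Bool → Set A) (Bb : Fin n → Bool → Set B),
      Finite A ∧ Finite B ∧
      (∀ x y, Γ.Adj x y →
        ∃ (a : A) (b : B), (x = Sum.inl a ∧ y = Sum.inr b) ∨
          (x = Sum.inr b ∧ y = Sum.inl a)) ∧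
      (∀ i s j t, (Ab i s ∩ Ab j t).Nonempty ↔ (i = j ∧ s = t)) ∧
      (∀ i s j t, (Bb i s ∩ Bb j t).Nonempty ↔ (i = j ∧ s = t)) ∧
      (⋃ i, ⋃ s, Ab i s) = Set.univ ∧
      (⋃ j, ⋃ t, Bb j t) = Set.univ ∧
      (¬ ∃ (v : A ⊕ B) (c : Γ.Walk v v), c.IsCycle ∧ c.length = 4) ∧
      (∀ i s j t,
        (Γ.induce (Sum.inl '' Ab i s ∪ Sum.inr '' Bb j t)).Connected) :=
  exists_sizeable_graph_general n
end

section
/- For every integer n ≥ 1 there exists a prime p and a sizeable graph Γ of rank n in which every block A_i^s and every block B_j^t has cardinality exactly p, and moreover, for every choice of i, j ∈ {1, …, n} and s, t ∈ {+, −}, the subgraph of Γ induced on A_i^s ∪ B_j^t is an embedded cycle of length 2p (in particular, it is connected and 2-regular). -/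
/-!
Take a prime `p > 9 ^ N`, where `N = (2n)²` is the number of pairs of blocks, and put
`A = B = (Fin n × Bool) × ZMod p`, the blocks being the fibres over `Fin n × Bool`. Number the
block pairs `(k, l)` injectively by `c < N` and join `(k, x) ∈ A` to `(l, y) ∈ B` iff
`y - x ∈ {g, 3g}` with `g = 3 ^ (2c)`.

On one block pair, `x ↦ x / g` and `y ↦ y / g - 2` identify the induced graph with the bipartite
double cover of the `p`-cycle, which for odd `p` is the `2p`-cycle (Chinese remainder theorem).
A 4-cycle would give `d₁ + d₃ = d₂ + d₄` for four such powers of `3`. Since `p` exceeds both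
sides this holds in `ℕ`, so the exponents agree in pairs; an exponent `e` determines its block
pair through `e / 2`, so two opposite vertices of the cycle coincide.
-/

/-- The cycle graph on `ℤ/Nℤ`: distinct vertices `i` and `j` are adjacent
if and only if `i - j = ±1`. -/
def cycleGraphZ (N : ℕ) : SimpleGraph (ZMod N) where
  Adj i j := i ≠ j ∧ (i - j = 1 ∨ j - i = 1)
  symm := ⟨fun i j h => ⟨h.1.symm, h.2.symm⟩⟩
  loopless := ⟨fun i h => h.1 rfl⟩

theorem Set.range_sumMap {α β α' β' : Type*} (f : α → α') (g : β → β') :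
    Set.range (Sum.map f g) = Sum.inl '' Set.range f ∪ Sum.inr '' Set.range g := by
  ext (a | b) <;> simp

theorem Set.range_prodMk_inter_nonempty_iff {α β : Type*} [Nonempty β] {a a' : α} :
    (Set.range (Prod.mk a : β → α × β) ∩ Set.range (Prod.mk a')).Nonempty ↔ a = a' := by
  constructor
  · rintro ⟨_, ⟨y, rfl⟩, ⟨y', h⟩⟩
    exact (Prod.ext_iff.1 h).1.symm
  · rintro rfl
    simp [Set.range_nonempty]

theorem ZMod.natCast_ne_zero_of_lt {a p : ℕ} (ha : a ≠ 0) (hap : a < p) : (a : ZMod p) ≠ 0 := by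
  rw [Ne, ZMod.natCast_eq_zero_iff]
  exact fun h => ha (Nat.eq_zero_of_dvd_of_lt h hap)

theorem Nat.pow_add_pow_lt_pow {b a c M : ℕ} (hb : 2 < b) (ha : a < M) (hc : c < M) :
    b ^ a + b ^ c < b ^ M := by
  have hpos : 0 < b ^ (M - 1) := Nat.pow_pos (by omega)
  have ha' : b ^ a ≤ b ^ (M - 1) := Nat.pow_le_pow_right (by omega) (by omega)
  have hc' : b ^ c ≤ b ^ (M - 1) := Nat.pow_le_pow_right (by omega) (by omega)
  have hM : b ^ M = b * b ^ (M - 1) := by rw [← pow_succ']; congr 1; omega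
  nlinarith

theorem Nat.pow_add_pow_eq_pow_add_pow {b a c a' c' : ℕ} (hb : 2 < b)
    (h : b ^ a + b ^ c = b ^ a' + b ^ c') : (a = a' ∧ c = c') ∨ (a = c' ∧ c = a') := by
  wlog hac : a ≤ c generalizing a c
  · have := this (a := c) (c := a) (by rwa [add_comm]) (by omega)
    tauto
  wlog hac' : a' ≤ c' generalizing a' c'
  · have := this (a' := c') (c' := a') (by rw [h, add_comm]) (by omega)
    tauto
  have hcc' : c = c' := by
    by_contra hne
    rcases Nat.lt_or_gt_of_ne hne with hlt | hlt
    · have := Nat.pow_add_pow_lt_pow hb (hac.trans_lt hlt) hlt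
      omega
    · have := Nat.pow_add_pow_lt_pow hb (hac'.trans_lt hlt) hlt
      omega
  subst hcc'
  exact .inl ⟨Nat.pow_right_injective (by omega) (Nat.add_right_cancel h), rfl⟩

namespace SimpleGraph

variable {α β α' β' V : Type*}

def bipartiteOfRel (r : α → β → Prop) : SimpleGraph (α ⊕ β) where
  Adj
  | .inl a, .inr b | .inr b, .inl a => r a b
  | _, _ => False
  symm := ⟨by rintro (a | b) (a' | b') h <;> exact h⟩
  loopless := ⟨by rintro (a | b) h <;> exact h⟩

variable {r : α → β → Prop} {r' : α' → β' → Prop}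

@[simp] theorem bipartiteOfRel_adj_inl_inr {a : α} {b : β} :
    (bipartiteOfRel r).Adj (.inl a) (.inr b) ↔ r a b := .rfl

@[simp] theorem bipartiteOfRel_adj_inr_inl {a : α} {b : β} :
    (bipartiteOfRel r).Adj (.inr b) (.inl a) ↔ r a b := .rfl

@[simp] theorem not_bipartiteOfRel_adj_inl_inl {a a' : α} :
    ¬ (bipartiteOfRel r).Adj (.inl a) (.inl a') := id

@[simp] theorem not_bipartiteOfRel_adj_inr_inr {b b' : β} :
    ¬ (bipartiteOfRel r).Adj (.inr b) (.inr b') := id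

theorem bipartiteOfRel_adj_exists {x y : α ⊕ β} (h : (bipartiteOfRel r).Adj x y) :
    ∃ a b, (x = .inl a ∧ y = .inr b) ∨ (x = .inr b ∧ y = .inl a) := by
  rcases x with a | b <;> rcases y with a' | b' <;> simp_all

theorem bipartiteDoubleCover_eq_bipartiteOfRel (G : SimpleGraph V) :
    G.bipartiteDoubleCover = bipartiteOfRel G.Adj := by
  ext (a | b) (a' | b') <;> simp [G.adj_comm]

def Embedding.bipartiteOfRel (f : α ↪ α') (g : β ↪ β') (h : ∀ a b, r a b ↔ r' (f a) (g b)) :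
    SimpleGraph.bipartiteOfRel r ↪g SimpleGraph.bipartiteOfRel r' where
  toEmbedding := f.sumMap g
  map_rel_iff' := by rintro (a | b) (a' | b') <;> simp [h]

theorem Walk.IsCycle.exists_adj_of_length_eq_four_s5 {G : SimpleGraph V} {v : V} {c : G.Walk v v}
    (hc : c.IsCycle) (h4 : c.length = 4) :
    ∃ u₀ u₁ u₂ u₃, u₀ ≠ u₂ ∧ u₁ ≠ u₃ ∧
      G.Adj u₀ u₁ ∧ G.Adj u₁ u₂ ∧ G.Adj u₂ u₃ ∧ G.Adj u₃ u₀ := by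
  refine ⟨c.getVert 0, c.getVert 1, c.getVert 2, c.getVert 3,
    hc.getVert_sub_one_ne_getVert_add_one (i := 1) (by omega),
    hc.getVert_sub_one_ne_getVert_add_one (i := 2) (by omega),
    c.adj_getVert_succ (by omega), c.adj_getVert_succ (by omega),
    c.adj_getVert_succ (by omega), ?_⟩
  simpa [← h4] using c.adj_getVert_succ (i := 3) (by omega)

theorem bipartiteOfRel_exists_of_isCycle_length_eq_four {v : α ⊕ β}
    {c : (bipartiteOfRel r).Walk v v} (hc : c.IsCycle) (h4 : c.length = 4) :
    ∃ a a' b b', a ≠ a' ∧ b ≠ b' ∧ r a b ∧ r a' b ∧ r a' b' ∧ r a b' := by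
  obtain ⟨u₀, u₁, u₂, u₃, h02, h13, h01, h12, h23, h30⟩ := hc.exists_adj_of_length_eq_four_s5 h4
  rcases u₀ with a | b <;> rcases u₁ with a₁ | b₁ <;> rcases u₂ with a₂ | b₂ <;>
    rcases u₃ with a₃ | b₃ <;> simp only [bipartiteOfRel_adj_inl_inr, bipartiteOfRel_adj_inr_inl,
      not_bipartiteOfRel_adj_inl_inl, not_bipartiteOfRel_adj_inr_inr, ne_eq, Sum.inl.injEq,
      Sum.inr.injEq] at * <;> try contradiction
  · exact ⟨a, a₂, b₁, b₃, h02, h13, h01, h12, h23, h30⟩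
  · exact ⟨a₁, a₃, b₂, b, h13, fun h => h02 h.symm, h12, h23, h30, h01⟩

end SimpleGraph

open SimpleGraph

theorem cycleGraphZ_adj_iff {N : ℕ} [Fact (1 < N)] {u v : ZMod N} :
    (cycleGraphZ N).Adj u v ↔ u - v = 1 ∨ v - u = 1 :=
  ⟨And.right, fun h => ⟨by rintro rfl; simp at h, h⟩⟩

theorem cycleGraphZ_connected (N : ℕ) [NeZero N] : (cycleGraphZ N).Connected := by
  have hreach : ∀ m : ℕ, (cycleGraphZ N).Reachable 0 m := by
    intro m
    induction m with
    | zero => simp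
    | succ m ih =>
      refine ih.trans ?_
      by_cases h : (m : ZMod N) = (m + 1 : ℕ)
      · rw [← h]
      · exact Adj.reachable ⟨h, Or.inr (by push_cast; ring)⟩
  refine connected_iff_exists_forall_reachable _ |>.2 ⟨0, fun v => ?_⟩
  simpa using hreach v.val

theorem nonempty_iso_bipartiteDoubleCover_cycleGraphZ {p : ℕ} [Fact (1 < p)] (hp : Odd p) :
    Nonempty ((cycleGraphZ p).bipartiteDoubleCover ≃g cycleGraphZ (2 * p)) := by
  let crt := ZMod.chineseRemainder (Nat.coprime_two_left.2 hp)
  let σ : ZMod p ⊕ ZMod p → ZMod 2 × ZMod p := Sum.elim (fun w => (0, w)) (fun w => (1, w))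
  have hσ : σ.Bijective := by
    refine ⟨?_, fun x => ?_⟩
    · rintro (w | w) (w' | w') h <;> simp_all [σ]
    · obtain ⟨ε, w⟩ := x
      fin_cases ε
      exacts [⟨.inl w, rfl⟩, ⟨.inr w, rfl⟩]
  have hsub : ∀ a b, crt.symm (σ a) - crt.symm (σ b) = 1 ↔ σ a - σ b = 1 := by
    intro a b
    rw [← map_sub, ← map_one crt.symm, crt.symm.injective.eq_iff]
  have : Fact (1 < 2 * p) := ⟨by have := Fact.out (p := 1 < p); omega⟩
  refine ⟨⟨(Equiv.ofBijective σ hσ).trans crt.symm.toEquiv, ?_⟩⟩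
  intro a b
  simp only [Equiv.trans_apply, Equiv.ofBijective_apply, RingEquiv.toEquiv_eq_coe,
    RingEquiv.coe_toEquiv, cycleGraphZ_adj_iff, hsub]
  rcases a with w | w <;> rcases b with w' | w' <;> simp [σ, Prod.ext_iff, cycleGraphZ_adj_iff]

section BlockDiffGraph

variable {K G : Type*}

def blockDiffGraph [AddGroup G] (D : K → K → Set G) : SimpleGraph ((K × G) ⊕ (K × G)) :=
  bipartiteOfRel fun a b => b.2 - a.2 ∈ D a.1 b.1

/-- Around a 4-cycle `(k, x), (l, y), (k', x'), (l', y')` of `blockDiffGraph D` the differences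
`d₁ = y - x`, `d₂ = y - x'`, `d₃ = y' - x'`, `d₄ = y' - x` satisfy `d₁ + d₃ = d₂ + d₄`. -/
def IsBlockSidon [Add G] (D : K → K → Set G) : Prop :=
  ∀ ⦃k k' l l' d₁ d₂ d₃ d₄⦄, d₁ ∈ D k l → d₂ ∈ D k' l → d₃ ∈ D k' l' → d₄ ∈ D k l' →
    d₁ + d₃ = d₂ + d₄ → (k = k' ∧ d₁ = d₂) ∨ (l = l' ∧ d₁ = d₄)

theorem blockDiffGraph_not_isCycle_length_four [AddCommGroup G] {D : K → K → Set G}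
    (hD : IsBlockSidon D) :
    ¬ ∃ (v : (K × G) ⊕ (K × G)) (c : (blockDiffGraph D).Walk v v), c.IsCycle ∧ c.length = 4 := by
  rintro ⟨v, c, hc, h4⟩
  obtain ⟨⟨k, x⟩, ⟨k', x'⟩, ⟨l, y⟩, ⟨l', y'⟩, hxx', hyy', h₁, h₂, h₃, h₄⟩ :=
    bipartiteOfRel_exists_of_isCycle_length_eq_four hc h4
  rcases hD h₁ h₂ h₃ h₄ (by abel) with ⟨rfl, h⟩ | ⟨rfl, h⟩
  · exact hxx' (by simpa using h)
  · exact hyy' (by simpa using h)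

theorem nonempty_iso_induce_blockDiffGraph {p : ℕ} [Fact p.Prime] (hp : Odd p)
    {D : K → K → Set (ZMod p)} {k l : K} {g : ZMod p} (hg : g ≠ 0) (hD : D k l = {g, 3 * g}) :
    Nonempty ((blockDiffGraph D).induce
        (Sum.inl '' Set.range (Prod.mk k) ∪ Sum.inr '' Set.range (Prod.mk l)) ≃g
      cycleGraphZ (2 * p)) := by
  let scale := Equiv.mulLeft₀ g hg
  let f : ZMod p ↪ K × ZMod p := scale.toEmbedding.trans (.sectR k _)
  let f' : ZMod p ↪ K × ZMod p :=
    (scale.trans (Equiv.addRight (2 * g))).toEmbedding.trans (.sectR l _)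
  have hrel : ∀ w w', (cycleGraphZ p).Adj w w' ↔ (f' w').2 - (f w).2 ∈ D (f w).1 (f' w').1 := by
    intro w w'
    change _ ↔ g * w' + 2 * g - g * w ∈ D k l
    rw [hD, cycleGraphZ_adj_iff, Set.mem_insert_iff, Set.mem_singleton_iff]
    grind
  have hrange : Set.range (Sum.map f f') =
      Sum.inl '' Set.range (Prod.mk k) ∪ Sum.inr '' Set.range (Prod.mk l) := by
    simp only [Set.range_sumMap, f, f', Function.Embedding.coe_trans, Equiv.coe_toEmbedding,
      (Equiv.surjective _).range_comp]
    rfl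
  rw [← hrange]
  refine ⟨(Embedding.bipartiteOfRel f f' hrel).isoInduceRange.symm.trans ?_⟩
  rw [← bipartiteDoubleCover_eq_bipartiteOfRel]
  exact (nonempty_iso_bipartiteDoubleCover_cycleGraphZ hp).some

end BlockDiffGraph

def powThreeDiffs {K : Type*} (p : ℕ) (c : K × K → ℕ) (k l : K) : Set (ZMod p) :=
  {3 ^ (2 * c (k, l)), 3 ^ (2 * c (k, l) + 1)}

section powThreeDiffs

variable {K : Type*} {p : ℕ} {c : K × K → ℕ}

theorem mem_powThreeDiffs {k l : K} {d : ZMod p} :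
    d ∈ powThreeDiffs p c k l ↔ ∃ e, e / 2 = c (k, l) ∧ d = 3 ^ e := by
  constructor
  · rintro (rfl | rfl)
    exacts [⟨_, by omega, rfl⟩, ⟨_, by omega, rfl⟩]
  · rintro ⟨e, he, rfl⟩
    obtain rfl | rfl : e = 2 * c (k, l) ∨ e = 2 * c (k, l) + 1 := by omega
    exacts [.inl rfl, .inr rfl]

theorem powThreeDiffs_eq {k l : K} :
    powThreeDiffs p c k l = {3 ^ (2 * c (k, l)), 3 * 3 ^ (2 * c (k, l))} := by
  rw [powThreeDiffs, pow_succ']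

theorem isBlockSidon_powThreeDiffs {M : ℕ} (hc : Function.Injective c) (hcM : ∀ kl, c kl < M)
    (hp : 9 ^ M ≤ p) : IsBlockSidon (powThreeDiffs p c) := by
  intro k k' l l' d₁ d₂ d₃ d₄ h₁ h₂ h₃ h₄ hsum
  obtain ⟨e₁, he₁, rfl⟩ := mem_powThreeDiffs.1 h₁
  obtain ⟨e₂, he₂, rfl⟩ := mem_powThreeDiffs.1 h₂
  obtain ⟨e₃, he₃, rfl⟩ := mem_powThreeDiffs.1 h₃
  obtain ⟨e₄, he₄, rfl⟩ := mem_powThreeDiffs.1 h₄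
  have hlt : ∀ {e e' : ℕ} {kl kl'}, e / 2 = c kl → e' / 2 = c kl' → 3 ^ e + 3 ^ e' < p :=
    fun {_ _ kl kl'} h h' => (Nat.pow_add_pow_lt_pow (M := 2 * M) (by norm_num)
      (by have := hcM kl; omega) (by have := hcM kl'; omega)).trans_le (by rwa [pow_mul])
  have hnat : 3 ^ e₁ + 3 ^ e₃ = 3 ^ e₂ + 3 ^ e₄ := by
    have := (ZMod.natCast_eq_natCast_iff' (3 ^ e₁ + 3 ^ e₃) (3 ^ e₂ + 3 ^ e₄) p).1
      (by push_cast; exact hsum)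
    rwa [Nat.mod_eq_of_lt (hlt he₁ he₃), Nat.mod_eq_of_lt (hlt he₂ he₄)] at this
  rcases Nat.pow_add_pow_eq_pow_add_pow (by norm_num) hnat with ⟨rfl, -⟩ | ⟨rfl, -⟩
  · exact .inl ⟨(Prod.ext_iff.1 (hc (he₁.symm.trans he₂))).1, rfl⟩
  · exact .inr ⟨(Prod.ext_iff.1 (hc (he₁.symm.trans he₄))).2, rfl⟩

end powThreeDiffs

theorem exists_sizeable_graph_with_cycle_blocks_general (n : ℕ) :
    ∃ (p : ℕ), p.Prime ∧
    ∃ (A B : Type) (Γ : SimpleGraph (A ⊕ B))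
      (Ab : Fin n → Bool → Set A) (Bb : Fin n → Bool → Set B),
      Finite A ∧ Finite B ∧
      (∀ x y, Γ.Adj x y →
        ∃ (a : A) (b : B), (x = Sum.inl a ∧ y = Sum.inr b) ∨
          (x = Sum.inr b ∧ y = Sum.inl a)) ∧
      (∀ i s j t, (Ab i s ∩ Ab j t).Nonempty ↔ (i = j ∧ s = t)) ∧
      (∀ i s j t, (Bb i s ∩ Bb j t).Nonempty ↔ (i = j ∧ s = t)) ∧
      (⋃ i, ⋃ s, Ab i s) = Set.univ ∧
      (⋃ j, ⋃ t, Bb j t) = Set.univ ∧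
      (¬ ∃ (v : A ⊕ B) (c : Γ.Walk v v), c.IsCycle ∧ c.length = 4) ∧
      (∀ i s, (Ab i s).ncard = p) ∧
      (∀ j t, (Bb j t).ncard = p) ∧
      (∀ i s j t,
        (Γ.induce (Sum.inl '' Ab i s ∪ Sum.inr '' Bb j t)).Connected) ∧
      (∀ i s j t,
        Nonempty
          ((Γ.induce (Sum.inl '' Ab i s ∪ Sum.inr '' Bb j t)) ≃g
            cycleGraphZ (2 * p))) := by
  let K := Fin n × Bool
  let c : K × K → ℕ := fun kl => Fintype.equivFin (K × K) kl
  obtain ⟨p, hp_ge, hp⟩ := Nat.exists_infinite_primes (9 ^ Fintype.card (K × K) + 4)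
  have : Fact p.Prime := ⟨hp⟩
  have hp4 : 4 ≤ p := (Nat.le_add_left 4 _).trans hp_ge
  have hodd : Odd p := hp.odd_of_ne_two (by omega)
  have hg : ∀ m : ℕ, (3 : ZMod p) ^ m ≠ 0 := fun m => pow_ne_zero m <| by
    exact_mod_cast ZMod.natCast_ne_zero_of_lt (a := 3) (by norm_num) (by omega)
  have hpartition : ∀ i s j t, (Set.range (Prod.mk ((i, s) : K) : ZMod p → K × ZMod p) ∩
      Set.range (Prod.mk (j, t))).Nonempty ↔ (i = j ∧ s = t) := fun i s j t => by
    rw [Set.range_prodMk_inter_nonempty_iff, Prod.mk.injEq]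
  have hcover : (⋃ i, ⋃ s, Set.range (Prod.mk ((i, s) : K) : ZMod p → K × ZMod p)) = Set.univ :=
    Set.eq_univ_of_forall fun ⟨⟨i, s⟩, x⟩ => Set.mem_iUnion₂.2 ⟨i, s, x, rfl⟩
  have hcard : ∀ k : K, (Set.range (Prod.mk k : ZMod p → K × ZMod p)).ncard = p := fun k => by
    rw [Set.ncard_range_of_injective (Prod.mk_right_injective k), Nat.card_zmod]
  have hsidon : IsBlockSidon (powThreeDiffs p c) :=
    isBlockSidon_powThreeDiffs (Fin.val_injective.comp (Fintype.equivFin _).injective)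
      (fun kl => (Fintype.equivFin _ kl).isLt) ((Nat.le_add_right _ _).trans hp_ge)
  exact ⟨p, hp, K × ZMod p, K × ZMod p, blockDiffGraph (powThreeDiffs p c),
    fun i s => Set.range (Prod.mk (i, s)), fun j t => Set.range (Prod.mk (j, t)),
    inferInstance, inferInstance, fun _ _ => bipartiteOfRel_adj_exists, hpartition, hpartition,
    hcover, hcover, blockDiffGraph_not_isCycle_length_four hsidon, fun _ _ => hcard _,
    fun _ _ => hcard _, fun _ _ _ _ =>
      (nonempty_iso_induce_blockDiffGraph hodd (hg _) powThreeDiffs_eq).some.connected_iff.2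
        (cycleGraphZ_connected _),
    fun _ _ _ _ => nonempty_iso_induce_blockDiffGraph hodd (hg _) powThreeDiffs_eq⟩

/-- For every integer `n ≥ 1` there exist a prime `p` and a sizeable graph of rank `n`
whose blocks all have cardinality exactly `p`, and in which the subgraph induced on the
union of any block of `A` with any block of `B` is an embedded cycle of length `2p`,
i.e. is isomorphic to the cycle graph on `2p` vertices. -/
theorem exists_sizeable_graph_with_cycle_blocks (n : ℕ) (hn : 1 ≤ n) :
    ∃ (p : ℕ), p.Prime ∧
    ∃ (A B : Type) (Γ : SimpleGraph (A ⊕ B))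
      (Ab : Fin n → Bool → Set A) (Bb : Fin n → Bool → Set B),
      Finite A ∧ Finite B ∧
      (∀ x y, Γ.Adj x y →
        ∃ (a : A) (b : B), (x = Sum.inl a ∧ y = Sum.inr b) ∨
          (x = Sum.inr b ∧ y = Sum.inl a)) ∧
      (∀ i s j t, (Ab i s ∩ Ab j t).Nonempty ↔ (i = j ∧ s = t)) ∧
      (∀ i s j t, (Bb i s ∩ Bb j t).Nonempty ↔ (i = j ∧ s = t)) ∧
      (⋃ i, ⋃ s, Ab i s) = Set.univ ∧
      (⋃ j, ⋃ t, Bb j t) = Set.univ ∧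
      (¬ ∃ (v : A ⊕ B) (c : Γ.Walk v v), c.IsCycle ∧ c.length = 4) ∧
      (∀ i s, (Ab i s).ncard = p) ∧
      (∀ j t, (Bb j t).ncard = p) ∧
      (∀ i s j t,
        (Γ.induce (Sum.inl '' Ab i s ∪ Sum.inr '' Bb j t)).Connected) ∧
      (∀ i s j t,
        Nonempty
          ((Γ.induce (Sum.inl '' Ab i s ∪ Sum.inr '' Bb j t)) ≃g
            cycleGraphZ (2 * p))) :=
  exists_sizeable_graph_with_cycle_blocks_general n
end
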